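/- Let 𝒞 be the ring of germs at +∞ of continuous functions ℝ → ℝ, let M be an asymptotic scale (a multiplicative ℝ-vector subspace of positive germs in a Hardy field such that distinct elements lie in distinct archimedean classes). If f, g ∈ 𝒞 have asymptotic expansions F = Σ a_m m and G = Σ b_m m in ℝ[[M]] respectively (with M-natural support), then f + g has asymptotic expansion F + G and f·g has asymptotic expansion F·G. -/

import Mathlib

open Filter

/-- `f ≺ g`: `g` is ultimately nonzero and `f/g → 0` at `+∞`. -/
def Prec (f g : ℝ → ℝ) : Prop :=
  (∀ᶠ x in atTop, g x ≠ 0) ∧ Tendsto (fun x => f x / g x) atTop (nhds 0)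

/-- `f ≍ g`: same archimedean class. -/
def AsympEq (f g : ℝ → ℝ) : Prop := f =O[atTop] g ∧ g =O[atTop] f

/-- `M` is an asymptotic scale: a multiplicative `ℝ`-vector subspace of the positive
germs of a Hardy field such that distinct elements lie in distinct archimedean
classes. -/
structure AsymScale (M : Set (ℝ → ℝ)) : Prop where
  pos : ∀ m ∈ M, ∀ x, 0 < m x
  one_mem : (fun _ : ℝ => (1 : ℝ)) ∈ M
  mul_mem : ∀ m ∈ M, ∀ n ∈ M, (fun x => m x * n x) ∈ M
  rpow_mem : ∀ m ∈ M, ∀ r : ℝ, (fun x => m x ^ r) ∈ M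
  total : ∀ m ∈ M, ∀ n ∈ M, m = n ∨ Prec m n ∨ Prec n m
  scale : ∀ m ∈ M, ∀ n ∈ M, AsympEq m n → m = n

/-- `f` has asymptotic expansion `F = Σ_{m ∈ M} a m · m` (at `+∞`): the support of the
coefficient function `a` is contained in `M` and is `M`-natural, and for every `n ∈ M`
the difference between `f` and the truncation `Σ_{m ≥ n} a m · m` is `≺ n`. -/
def HasAE (M : Set (ℝ → ℝ)) (f : ℝ → ℝ) (a : (ℝ → ℝ) → ℝ) : Prop :=
  (∀ m, a m ≠ 0 → m ∈ M) ∧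
  (∀ n ∈ M, {m : ℝ → ℝ | a m ≠ 0 ∧ Prec n m}.Finite) ∧
  ∀ n ∈ M, ∀ hfin : {m : ℝ → ℝ | a m ≠ 0 ∧ (m = n ∨ Prec n m)}.Finite,
    Prec (fun x => f x - ∑ m ∈ hfin.toFinset, a m * m x) n

/-!
Within `M`, `n ≼ m` is the same as `n = O(m)`, so truncation errors can be handled with
little-o calculus. The sum is immediate. For the product at a monomial `n`, pick
`u = n / w ∈ M` with `w` dominating `√n` and both supports, and truncate `f` and `g` at `u`:
with `A`, `B` these truncations, `fg - AB = (f - A)(g - B) + (f - A)B + A(g - B)` is `o(n)`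
since `u² ≼ n`, `u r ≼ n` and `q u ≼ n` on the supports. Of the finitely many products `q r`
in `AB`, those `≺ n` contribute `o(n)`, and those `≽ n` regroup into the truncation of the
Hahn product, because every pair with `q r ≽ n` has `u ≼ q` and `u ≼ r`.
-/

open Asymptotics

/-- `n ≼ m`. -/
def Preceq (n m : ℝ → ℝ) : Prop := m = n ∨ Prec n m

theorem prec_iff_isLittleO {f g : ℝ → ℝ} (hg : ∀ᶠ x in atTop, g x ≠ 0) :
    Prec f g ↔ f =o[atTop] g := by
  rw [isLittleO_iff_tendsto' (hg.mono fun x hx h => absurd h hx)]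
  exact ⟨And.right, And.intro hg⟩

theorem Prec.isLittleO {f g : ℝ → ℝ} (h : Prec f g) : f =o[atTop] g :=
  (prec_iff_isLittleO h.1).1 h

theorem Preceq.isBigO {n m : ℝ → ℝ} (h : Preceq n m) : n =O[atTop] m := by
  rcases h with rfl | h
  · exact isBigO_refl _ _
  · exact h.isLittleO.isBigO

theorem isBigO_div_of_isBigO_mul {n q w : ℝ → ℝ} (hw : ∀ x, 0 < w x)
    (h : n =O[atTop] fun x => q x * w x) : (fun x => n x / w x) =O[atTop] q :=
  (h.mul (isBigO_refl (fun x => (w x)⁻¹) atTop)).congr (fun _ => rfl)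
    (fun x => mul_inv_cancel_right₀ (hw x).ne' (q x))

theorem sum_toFinset_eq_sum {α : Type*} {a : α → ℝ} {P : α → Prop}
    (hfin : {m | a m ≠ 0 ∧ P m}.Finite) {s : Finset α}
    (hs : ∀ m, a m ≠ 0 → P m → m ∈ s) (hP : ∀ m ∈ s, P m) (φ : α → ℝ) :
    ∑ m ∈ hfin.toFinset, a m * φ m = ∑ m ∈ s, a m * φ m := by
  refine Finset.sum_subset (fun m hm => ?_) fun m hm hm' => ?_
  · obtain ⟨ha, hPm⟩ := hfin.mem_toFinset.1 hm
    exact hs m ha hPm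
  · have : a m = 0 := by
      by_contra ha
      exact hm' (hfin.mem_toFinset.2 ⟨ha, hP m hm⟩)
    rw [this, zero_mul]

namespace AsymScale

variable {M : Set (ℝ → ℝ)} (hM : AsymScale M)
include hM

theorem eventually_ne_zero {n : ℝ → ℝ} (hn : n ∈ M) : ∀ᶠ x in atTop, n x ≠ 0 :=
  Eventually.of_forall fun x => (hM.pos n hn x).ne'

theorem preceq_of_isBigO {n m : ℝ → ℝ} (hn : n ∈ M) (hm : m ∈ M) (h : n =O[atTop] m) :
    Preceq n m := by
  rcases hM.total m hm n hn with h' | h' | h'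
  · exact Or.inl h'
  · exact absurd (h.trans_isLittleO h'.isLittleO)
      (isLittleO_irrefl (hM.eventually_ne_zero hn).frequently)
  · exact Or.inr h'

theorem div_mem {m n : ℝ → ℝ} (hm : m ∈ M) (hn : n ∈ M) : (fun x => m x / n x) ∈ M := by
  convert hM.mul_mem m hm _ (hM.rpow_mem n hn (-1)) using 2 with x
  rw [Real.rpow_neg_one, div_eq_mul_inv]

theorem exists_isBigO_bound (s : Finset (ℝ → ℝ)) (hs : ∀ m ∈ s, m ∈ M) :
    ∃ w ∈ M, ∀ m ∈ s, m =O[atTop] w := by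
  classical
  induction s using Finset.induction_on with
  | empty => exact ⟨_, hM.one_mem, by simp⟩
  | @insert q t _ ih =>
    obtain ⟨w, hwM, hw⟩ := ih fun m hm => hs m (Finset.mem_insert_of_mem hm)
    have hqM := hs q (Finset.mem_insert_self q t)
    rcases hM.total q hqM w hwM with rfl | hqw | hwq
    · exact ⟨q, hqM, by simpa [isBigO_refl] using hw⟩
    · exact ⟨w, hwM, by simpa [hqw.isLittleO.isBigO] using hw⟩
    · exact ⟨q, hqM, by
        simpa [isBigO_refl] using fun m hm => (hw m hm).trans hwq.isLittleO.isBigO⟩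

end AsymScale

def IsNatural (M : Set (ℝ → ℝ)) (a : (ℝ → ℝ) → ℝ) : Prop :=
  (∀ m, a m ≠ 0 → m ∈ M) ∧ ∀ n ∈ M, {m : ℝ → ℝ | a m ≠ 0 ∧ Prec n m}.Finite

namespace IsNatural

variable {M : Set (ℝ → ℝ)} {a b : (ℝ → ℝ) → ℝ}

theorem finite_preceq (ha : IsNatural M a) {n : ℝ → ℝ} (hn : n ∈ M) :
    {m | a m ≠ 0 ∧ Preceq n m}.Finite := by
  refine ((ha.2 n hn).insert n).subset ?_
  rintro m ⟨hm, rfl | hnm⟩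
  · exact Set.mem_insert m _
  · exact Set.mem_insert_of_mem _ ⟨hm, hnm⟩

theorem exists_bound (hM : AsymScale M) (ha : IsNatural M a) {m₀ : ℝ → ℝ}
    (hm₀ : m₀ ∈ M) :
    ∃ w ∈ M, m₀ =O[atTop] w ∧ ∀ q, a q ≠ 0 → q =O[atTop] w := by
  classical
  obtain ⟨w, hwM, hw⟩ := hM.exists_isBigO_bound (insert m₀ (ha.2 m₀ hm₀).toFinset) (by
    simp only [Finset.mem_insert, Set.Finite.mem_toFinset]
    rintro m (rfl | ⟨hm, -⟩)
    exacts [hm₀, ha.1 m hm])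
  have hm₀w := hw m₀ (Finset.mem_insert_self _ _)
  refine ⟨w, hwM, hm₀w, fun q hq => ?_⟩
  rcases hM.total q (ha.1 q hq) m₀ hm₀ with rfl | hqm₀ | hm₀q
  · exact hm₀w
  · exact hqm₀.isLittleO.isBigO.trans hm₀w
  · exact hw q (Finset.mem_insert_of_mem ((ha.2 m₀ hm₀).mem_toFinset.2 ⟨hq, hm₀q⟩))

theorem exists_cutoff (hM : AsymScale M) (ha : IsNatural M a) (hb : IsNatural M b)
    {n : ℝ → ℝ} (hn : n ∈ M) :
    ∃ u ∈ M, (fun x => u x * u x) =O[atTop] n ∧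
      (∀ q, a q ≠ 0 → (fun x => q x * u x) =O[atTop] n) ∧
      (∀ r, b r ≠ 0 → (fun x => u x * r x) =O[atTop] n) ∧
      ∀ q r, a q ≠ 0 → b r ≠ 0 → Preceq n (fun x => q x * r x) →
        Preceq u q ∧ Preceq u r := by
  obtain ⟨w₁, hw₁M, hsqrt, haw₁⟩ := ha.exists_bound hM (hM.rpow_mem n hn (1 / 2))
  obtain ⟨w, hwM, hw₁w, hbw⟩ := hb.exists_bound hM hw₁M
  have haw : ∀ q, a q ≠ 0 → q =O[atTop] w := fun q hq => (haw₁ q hq).trans hw₁w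
  have hwpos := hM.pos w hwM
  have hnpos := hM.pos n hn
  set u : ℝ → ℝ := fun x => n x / w x
  have huM : u ∈ M := hM.div_mem hn hwM
  have hnw : ∀ x, u x * w x = n x := fun x => div_mul_cancel₀ _ (hwpos x).ne'
  refine ⟨u, huM, ?_, fun q hq => ?_, fun r hr => ?_, fun q r hq hr hqr => ⟨?_, ?_⟩⟩
  · have hu : u =O[atTop] fun x => n x ^ (1 / 2 : ℝ) := by
      refine isBigO_div_of_isBigO_mul hwpos
        (((isBigO_refl _ _).mul (hsqrt.trans hw₁w)).congr_left ?_)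
      intro x
      rw [← Real.rpow_add (hnpos x)]
      norm_num
    refine (hu.mul hu).congr_right fun x => ?_
    rw [← Real.rpow_add (hnpos x)]
    norm_num
  · exact ((haw q hq).mul (isBigO_refl u _)).congr_right fun x => by rw [mul_comm, hnw]
  · exact ((isBigO_refl u _).mul (hbw r hr)).congr_right hnw
  · refine hM.preceq_of_isBigO huM (ha.1 q hq) (isBigO_div_of_isBigO_mul hwpos ?_)
    exact hqr.isBigO.trans ((isBigO_refl q _).mul (hbw r hr))
  · refine hM.preceq_of_isBigO huM (hb.1 r hr) (isBigO_div_of_isBigO_mul hwpos ?_)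
    exact hqr.isBigO.trans
      (((haw q hq).mul (isBigO_refl r _)).congr_right fun x => mul_comm _ _)

theorem finite_conv (hM : AsymScale M) (ha : IsNatural M a) (hb : IsNatural M b)
    (p : ℝ → ℝ) : {q | a q ≠ 0 ∧ b (fun x => p x / q x) ≠ 0}.Finite := by
  rcases Set.eq_empty_or_nonempty {q | a q ≠ 0 ∧ b (fun x => p x / q x) ≠ 0}
    with he | ⟨q₀, hq₀, hpq₀⟩
  · exact he ▸ Set.finite_empty
  have hdiv : ∀ q, a q ≠ 0 → (fun x => q x * (p x / q x)) = p := fun q hq =>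
    funext fun x => mul_div_cancel₀ _ (hM.pos q (ha.1 q hq) x).ne'
  have hpM : p ∈ M := hdiv q₀ hq₀ ▸ hM.mul_mem _ (ha.1 q₀ hq₀) _ (hb.1 _ hpq₀)
  obtain ⟨u, huM, -, -, -, hcut⟩ := ha.exists_cutoff hM hb hpM
  exact (ha.finite_preceq huM).subset fun q ⟨hq, hpq⟩ =>
    ⟨hq, (hcut q _ hq hpq (Or.inl (hdiv q hq))).1⟩

end IsNatural

theorem AsymScale.prec_of_not_preceq {M : Set (ℝ → ℝ)} (hM : AsymScale M) {m n : ℝ → ℝ}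
    (hm : m ∈ M) (hn : n ∈ M) (h : ¬Preceq n m) : Prec m n := by
  rcases hM.total m hm n hn with hmn | hmn | hnm
  exacts [absurd (Or.inl hmn) h, hmn, absurd (Or.inr hnm) h]

theorem isLittleO_mul_sub_mul {α : Type*} {l : Filter α} {f g A B u n : α → ℝ}
    (hf : (fun x => f x - A x) =o[l] u) (hg : (fun x => g x - B x) =o[l] u)
    (huu : (fun x => u x * u x) =O[l] n) (hAu : (fun x => A x * u x) =O[l] n)
    (huB : (fun x => u x * B x) =O[l] n) :
    (fun x => f x * g x - A x * B x) =o[l] n := by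
  have h₁ := (hf.mul hg).trans_isBigO huu
  have h₂ := (hf.mul_isBigO (isBigO_refl B l)).trans_isBigO huB
  have h₃ := ((isBigO_refl A l).mul_isLittleO hg).trans_isBigO hAu
  exact ((h₁.add h₂).add h₃).congr_left fun x => by ring

noncomputable def hahnMul (a b : (ℝ → ℝ) → ℝ) (p : ℝ → ℝ) : ℝ :=
  ∑ᶠ q, a q * b fun x => p x / q x

section hahnMul

open Classical

variable {a b : (ℝ → ℝ) → ℝ}

theorem exists_ne_zero_of_hahnMul_ne_zero {p : ℝ → ℝ} (h : hahnMul a b p ≠ 0) :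
    ∃ q, a q ≠ 0 ∧ b (fun x => p x / q x) ≠ 0 := by
  by_contra! h'
  refine h (finsum_eq_zero_of_forall_eq_zero fun q => ?_)
  by_cases hq : a q = 0
  · rw [hq, zero_mul]
  · rw [h' q hq, mul_zero]

theorem hahnMul_eq_sum_filter (hapos : ∀ q, a q ≠ 0 → ∀ x, 0 < q x) {p : ℝ → ℝ}
    (K : Finset ((ℝ → ℝ) × (ℝ → ℝ)))
    (hK : ∀ q r, a q ≠ 0 → b r ≠ 0 → (fun x => q x * r x) = p → (q, r) ∈ K) :
    hahnMul a b p = ∑ z ∈ K with (fun x => z.1 x * z.2 x) = p, a z.1 * b z.2 := by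
  have hdiv : ∀ q, a q ≠ 0 → (fun x => q x * (p x / q x)) = p := fun q hq =>
    funext fun x => mul_div_cancel₀ _ (hapos q hq x).ne'
  have hsnd : ∀ z : (ℝ → ℝ) × (ℝ → ℝ), (fun x => z.1 x * z.2 x) = p → a z.1 ≠ 0 →
      z.2 = fun x => p x / z.1 x := fun z hz hz₁ => funext fun x => by
    rw [← hz, mul_div_cancel_left₀ _ (hapos z.1 hz₁ x).ne']
  rw [hahnMul, finsum_eq_sum_of_support_subset _
    (s := (K.filter fun z => (fun x => z.1 x * z.2 x) = p).image Prod.fst) ?_]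
  · refine (Finset.sum_bij_ne_zero (fun z _ _ => z.1) (fun z hz _ => Finset.mem_image_of_mem _ hz)
      ?_ ?_ ?_).symm
    · intro z hz hz0 z' hz' hz0' h
      rw [Finset.mem_filter] at hz hz'
      exact Prod.ext h (by rw [hsnd z hz.2 (left_ne_zero_of_mul hz0),
        hsnd z' hz'.2 (left_ne_zero_of_mul hz0'), h])
    · intro q _ hq
      obtain ⟨hq₁, hq₂⟩ := mul_ne_zero_iff.1 hq
      exact ⟨(q, fun x => p x / q x),
        Finset.mem_filter.2 ⟨hK q _ hq₁ hq₂ (hdiv q hq₁), hdiv q hq₁⟩, hq, rfl⟩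
    · intro z hz hz0
      rw [hsnd z (Finset.mem_filter.1 hz).2 (left_ne_zero_of_mul hz0)]
  · intro q hq
    obtain ⟨hq₁, hq₂⟩ := mul_ne_zero_iff.1 hq
    exact Finset.mem_image.2 ⟨(q, fun x => p x / q x),
      Finset.mem_filter.2 ⟨hK q _ hq₁ hq₂ (hdiv q hq₁), hdiv q hq₁⟩, rfl⟩

theorem sum_image_hahnMul (hapos : ∀ q, a q ≠ 0 → ∀ x, 0 < q x)
    (K : Finset ((ℝ → ℝ) × (ℝ → ℝ)))
    (hK : ∀ q r, a q ≠ 0 → b r ≠ 0 →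
      (fun x => q x * r x) ∈ K.image (fun z x => z.1 x * z.2 x) → (q, r) ∈ K) (x : ℝ) :
    ∑ p ∈ K.image (fun z x => z.1 x * z.2 x), hahnMul a b p * p x =
      ∑ z ∈ K, a z.1 * b z.2 * (z.1 x * z.2 x) := by
  refine Finset.sum_image' _ fun z hz => ?_
  rw [hahnMul_eq_sum_filter hapos K fun q r hq hr hqr =>
    hK q r hq hr (by rw [hqr]; exact Finset.mem_image_of_mem _ hz), Finset.sum_mul]
  refine Finset.sum_congr rfl fun z' hz' => ?_
  rw [← (Finset.mem_filter.1 hz').2]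

theorem sum_mul_sum_eq_sum_image_hahnMul_add (hapos : ∀ q, a q ≠ 0 → ∀ x, 0 < q x)
    (S T : Finset (ℝ → ℝ)) (P : (ℝ → ℝ) × (ℝ → ℝ) → Prop)
    (hK : ∀ q r, a q ≠ 0 → b r ≠ 0 → (fun x => q x * r x) ∈
      ((S ×ˢ T).filter P).image (fun z x => z.1 x * z.2 x) → (q, r) ∈ (S ×ˢ T).filter P)
    (x : ℝ) :
    (∑ q ∈ S, a q * q x) * (∑ r ∈ T, b r * r x) =
      ∑ p ∈ ((S ×ˢ T).filter P).image (fun z x => z.1 x * z.2 x), hahnMul a b p * p x +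
        ∑ z ∈ S ×ˢ T with ¬P z, a z.1 * b z.2 * (z.1 x * z.2 x) := by
  rw [sum_image_hahnMul hapos _ hK, Finset.sum_filter_add_sum_filter_not, Finset.sum_mul_sum,
    ← Finset.sum_product']
  simp only [mul_mul_mul_comm]

end hahnMul

theorem isBigO_sum_mul {α ι : Type*} {l : Filter α} {s : Finset ι} {φ : ι → α → ℝ}
    {u n : α → ℝ} (c : ι → ℝ) (h : ∀ i ∈ s, (fun x => φ i x * u x) =O[l] n) :
    (fun x => (∑ i ∈ s, c i * φ i x) * u x) =O[l] n := by
  refine (IsBigO.sum fun i hi => (h i hi).const_mul_left (c i)).congr_left fun x => ?_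
  simp only [Finset.sum_apply, Finset.sum_mul, mul_assoc]

open Classical in
theorem AsymScale.isLittleO_sum_filter_not_preceq {M : Set (ℝ → ℝ)} (hM : AsymScale M)
    {ι : Type*} {n : ℝ → ℝ} (hn : n ∈ M) (s : Finset ι) {φ : ι → ℝ → ℝ}
    (hφ : ∀ i ∈ s, φ i ∈ M) (c : ι → ℝ) :
    (fun x => ∑ i ∈ s with ¬Preceq n (φ i), c i * φ i x) =o[atTop] n := by
  refine (IsLittleO.sum fun i hi => ?_).congr_left fun x => Finset.sum_apply x _ _
  obtain ⟨hi, hni⟩ := Finset.mem_filter.1 hi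
  exact (hM.prec_of_not_preceq (hφ i hi) hn hni).isLittleO.const_mul_left (c i)

namespace HasAE

variable {M : Set (ℝ → ℝ)} {f g : ℝ → ℝ} {a b : (ℝ → ℝ) → ℝ}

theorem isNatural (h : HasAE M f a) : IsNatural M a := ⟨h.1, h.2.1⟩

theorem isLittleO (hM : AsymScale M) (h : HasAE M f a) {n : ℝ → ℝ} (hn : n ∈ M)
    {s : Finset (ℝ → ℝ)} (hs : ∀ m, a m ≠ 0 → Preceq n m → m ∈ s)
    (hP : ∀ m ∈ s, Preceq n m) :
    (fun x => f x - ∑ m ∈ s, a m * m x) =o[atTop] n := by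
  have hfin := h.isNatural.finite_preceq hn
  exact ((prec_iff_isLittleO (hM.eventually_ne_zero hn)).1 (h.2.2 n hn hfin)).congr_left
    fun x => congrArg (f x - ·) (sum_toFinset_eq_sum hfin hs hP fun m => m x)

theorem of_isLittleO (hM : AsymScale M) (hsupp : ∀ m, a m ≠ 0 → m ∈ M)
    (htrunc : ∀ n ∈ M, ∃ s : Finset (ℝ → ℝ),
      (∀ m, a m ≠ 0 → Preceq n m → m ∈ s) ∧ (∀ m ∈ s, Preceq n m) ∧
      (fun x => f x - ∑ m ∈ s, a m * m x) =o[atTop] n) :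
    HasAE M f a := by
  refine ⟨hsupp, fun n hn => ?_, fun n hn hfin => ?_⟩ <;>
    obtain ⟨s, hs, hP, hs_o⟩ := htrunc n hn
  · exact s.finite_toSet.subset fun m ⟨hm, hnm⟩ => hs m hm (Or.inr hnm)
  · rw [prec_iff_isLittleO (hM.eventually_ne_zero hn)]
    exact hs_o.congr_left fun x =>
      congrArg (f x - ·) (sum_toFinset_eq_sum (P := Preceq n) hfin hs hP fun m => m x).symm

theorem add (hM : AsymScale M) (hf : HasAE M f a) (hg : HasAE M g b) :
    HasAE M (fun x => f x + g x) (fun m => a m + b m) := by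
  classical
  have hab : ∀ m, a m + b m ≠ 0 → a m ≠ 0 ∨ b m ≠ 0 := fun m hm => by
    contrapose! hm
    rw [hm.1, hm.2, add_zero]
  refine of_isLittleO hM (fun m hm => (hab m hm).elim (hf.1 m) (hg.1 m)) fun n hn => ?_
  set s := (hf.isNatural.finite_preceq hn).toFinset ∪ (hg.isNatural.finite_preceq hn).toFinset
  have hs : ∀ m, a m ≠ 0 ∨ b m ≠ 0 → Preceq n m → m ∈ s := fun m hm hnm => by
    simp only [s, Finset.mem_union, Set.Finite.mem_toFinset, Set.mem_ofPred_eq]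
    tauto
  have hP : ∀ m ∈ s, Preceq n m := fun m hm => by
    simp only [s, Finset.mem_union, Set.Finite.mem_toFinset, Set.mem_ofPred_eq] at hm
    rcases hm with ⟨-, h⟩ | ⟨-, h⟩ <;> exact h
  refine ⟨s, fun m hm => hs m (hab m hm), hP, ?_⟩
  refine ((hf.isLittleO hM hn (fun m hm => hs m (Or.inl hm)) hP).add
    (hg.isLittleO hM hn (fun m hm => hs m (Or.inr hm)) hP)).congr_left fun x => ?_
  simp only [add_mul, Finset.sum_add_distrib]
  ring

open Classical in
theorem mul (hM : AsymScale M) (hf : HasAE M f a) (hg : HasAE M g b) :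
    HasAE M (fun x => f x * g x) (hahnMul a b) := by
  have hapos : ∀ q, a q ≠ 0 → ∀ x, 0 < q x := fun q hq => hM.pos q (hf.1 q hq)
  have hdiv : ∀ p q, a q ≠ 0 → (fun x => q x * (p x / q x)) = p := fun p q hq =>
    funext fun x => mul_div_cancel₀ _ (hapos q hq x).ne'
  refine of_isLittleO hM (fun p hp => ?_) fun n hn => ?_
  · obtain ⟨q, hq, hpq⟩ := exists_ne_zero_of_hahnMul_ne_zero hp
    exact hdiv p q hq ▸ hM.mul_mem q (hf.1 q hq) _ (hg.1 _ hpq)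
  obtain ⟨u, huM, huu, hqu, hur, hcut⟩ := hf.isNatural.exists_cutoff hM hg.isNatural hn
  have hTa := hf.isNatural.finite_preceq huM
  have hTb := hg.isNatural.finite_preceq huM
  set P : (ℝ → ℝ) × (ℝ → ℝ) → Prop := fun z => Preceq n fun x => z.1 x * z.2 x
  set K := (hTa.toFinset ×ˢ hTb.toFinset).filter P
  have hK : ∀ q r, a q ≠ 0 → b r ≠ 0 → Preceq n (fun x => q x * r x) → (q, r) ∈ K :=
    fun q r hq hr hqr => Finset.mem_filter.2 ⟨Finset.mem_product.2
      ⟨hTa.mem_toFinset.2 ⟨hq, (hcut q r hq hr hqr).1⟩,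
        hTb.mem_toFinset.2 ⟨hr, (hcut q r hq hr hqr).2⟩⟩, hqr⟩
  have hKn : ∀ p ∈ K.image (fun z x => z.1 x * z.2 x), Preceq n p := by
    simp only [Finset.mem_image]
    rintro p ⟨z, hz, rfl⟩
    exact (Finset.mem_filter.1 hz).2
  refine ⟨K.image fun z x => z.1 x * z.2 x, fun p hp hnp => ?_, hKn, ?_⟩
  · obtain ⟨q, hq, hpq⟩ := exists_ne_zero_of_hahnMul_ne_zero hp
    exact Finset.mem_image.2 ⟨_, hK q _ hq hpq (by rwa [hdiv p q hq]), hdiv p q hq⟩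
  have hA := hf.isLittleO hM huM (fun m hm hum => hTa.mem_toFinset.2 ⟨hm, hum⟩)
    fun m hm => (hTa.mem_toFinset.1 hm).2
  have hB := hg.isLittleO hM huM (fun m hm hum => hTb.mem_toFinset.2 ⟨hm, hum⟩)
    fun m hm => (hTb.mem_toFinset.1 hm).2
  have hAu := isBigO_sum_mul a fun q hq => hqu q (hTa.mem_toFinset.1 hq).1
  have huB := (isBigO_sum_mul b fun r hr => (hur r (hTb.mem_toFinset.1 hr).1).congr_left
    fun x => mul_comm (u x) (r x)).congr_left fun x => mul_comm _ (u x)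
  have hlow := hM.isLittleO_sum_filter_not_preceq hn (hTa.toFinset ×ˢ hTb.toFinset)
    (φ := fun z x => z.1 x * z.2 x) (fun z hz => by
      obtain ⟨hq, hr⟩ := Finset.mem_product.1 hz
      exact hM.mul_mem _ (hf.1 _ (hTa.mem_toFinset.1 hq).1) _ (hg.1 _ (hTb.mem_toFinset.1 hr).1))
    fun z => a z.1 * b z.2
  refine ((isLittleO_mul_sub_mul hA hB huu hAu huB).add hlow).congr_left fun x => ?_
  rw [sum_mul_sum_eq_sum_image_hahnMul_add hapos _ _ P
    (fun q r hq hr hqr => hK q r hq hr (hKn _ hqr)) x]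
  ring

end HasAE

theorem stmt15_general (M : Set (ℝ → ℝ)) (hM : AsymScale M)
    (f g : ℝ → ℝ)
    (a b : (ℝ → ℝ) → ℝ) (hfa : HasAE M f a) (hgb : HasAE M g b) :
    HasAE M (fun x => f x + g x) (fun m => a m + b m) ∧
    (∀ p : ℝ → ℝ, {q : ℝ → ℝ | a q ≠ 0 ∧ b (fun x => p x / q x) ≠ 0}.Finite) ∧
    HasAE M (fun x => f x * g x)
      (fun p => ∑ᶠ q : ℝ → ℝ, a q * b fun x => p x / q x) :=
  ⟨hfa.add hM hgb, hfa.isNatural.finite_conv hM hgb.isNatural, hfa.mul hM hgb⟩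

/-- If `f` and `g` (germs at `+∞` of continuous functions) have asymptotic expansions
`F = Σ a_m m` and `G = Σ b_m m` in `ℝ[[M]]`, then `f + g` has asymptotic expansion
`F + G` and `f·g` has asymptotic expansion `F·G` (the Hahn convolution product, which
is well defined: for each monomial only finitely many pairs contribute). -/
theorem stmt15 (M : Set (ℝ → ℝ)) (hM : AsymScale M)
    (f g : ℝ → ℝ) (hfc : Continuous f) (hgc : Continuous g)
    (a b : (ℝ → ℝ) → ℝ) (hfa : HasAE M f a) (hgb : HasAE M g b) :
    HasAE M (fun x => f x + g x) (fun m => a m + b m) ∧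
    (∀ p : ℝ → ℝ, {q : ℝ → ℝ | a q ≠ 0 ∧ b (fun x => p x / q x) ≠ 0}.Finite) ∧
    HasAE M (fun x => f x * g x)
      (fun p => ∑ᶠ q : ℝ → ℝ, a q * b fun x => p x / q x) :=
  stmt15_general M hM f g a b hfa hgb
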